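/- (Modified Dai–Yuan sufficient descent) Let ζ > 1. Consider the conjugate gradient iteration in which each t_k satisfies the strong Wolfe conditions at x^k along d^k, and suppose that for every k ≥ 1: β_k ≥ 0 and β_k·(ψ_{x^k}(d^{k−1}) − ζ·ψ_{x^{k−1}}(d^{k−1})) ≤ −ψ_{x^k}(v(x^k)) (i.e., β_k is at most the modified Dai–Yuan parameter β_k^{mDY} := −ψ_{x^k}(v(x^k)) / (ψ_{x^k}(d^{k−1}) − ζ·ψ_{x^{k−1}}(d^{k−1})), whose denominator is positive). Then for all k ≥ 0, ψ_{x^k}(d^k) ≤ (ζ/(ζ+σ))·ψ_{x^k}(v(x^k)) < 0; i.e., the sufficient descent condition holds with c = ζ/(ζ+σ). -/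

import Mathlib

open scoped BigOperators

noncomputable def pd (n : ℕ) (F : EuclideanSpace ℝ (Fin n) → ℝ)
    (x : EuclideanSpace ℝ (Fin n)) (j : Fin n) : ℝ :=
  fderiv ℝ F x (EuclideanSpace.single j (1 : ℝ))

noncomputable def glo (n : ℕ) (F H : EuclideanSpace ℝ (Fin n) → ℝ)
    (x : EuclideanSpace ℝ (Fin n)) (j : Fin n) : ℝ :=
  min (pd n F x j) (pd n H x j)

noncomputable def ghi (n : ℕ) (F H : EuclideanSpace ℝ (Fin n) → ℝ)
    (x : EuclideanSpace ℝ (Fin n)) (j : Fin n) : ℝ :=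
  max (pd n F x j) (pd n H x j)

noncomputable def gloVec (n : ℕ) (F H : EuclideanSpace ℝ (Fin n) → ℝ)
    (x : EuclideanSpace ℝ (Fin n)) : EuclideanSpace ℝ (Fin n) :=
  WithLp.toLp 2 (fun j => glo n F H x j)

noncomputable def ghiVec (n : ℕ) (F H : EuclideanSpace ℝ (Fin n) → ℝ)
    (x : EuclideanSpace ℝ (Fin n)) : EuclideanSpace ℝ (Fin n) :=
  WithLp.toLp 2 (fun j => ghi n F H x j)

noncomputable def psi (m n : ℕ) (Gl Gu : Fin m → EuclideanSpace ℝ (Fin n) → ℝ)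
    (x v : EuclideanSpace ℝ (Fin n)) : ℝ :=
  ⨆ i : Fin m, (1 / 2 : ℝ) *
    ((∑ j : Fin n, (glo n (Gl i) (Gu i) x j + ghi n (Gl i) (Gu i) x j) * v j) +
     (∑ j : Fin n, (ghi n (Gl i) (Gu i) x j - glo n (Gl i) (Gu i) x j) * |v j|))

def LevelSet (m n : ℕ) (Gl Gu : Fin m → EuclideanSpace ℝ (Fin n) → ℝ)
    (x0 : EuclideanSpace ℝ (Fin n)) : Set (EuclideanSpace ℝ (Fin n)) :=
  {x | ∀ i : Fin m, Gl i x ≤ Gl i x0 ∧ Gu i x ≤ Gu i x0}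

def StdWolfe (m n : ℕ) (Gl Gu : Fin m → EuclideanSpace ℝ (Fin n) → ℝ)
    (ρ σ : ℝ) (x d : EuclideanSpace ℝ (Fin n)) (t : ℝ) : Prop :=
  (∀ i : Fin m,
      Gl i (x + t • d) ≤ Gl i x + ρ * t * psi m n Gl Gu x d ∧
      Gu i (x + t • d) ≤ Gu i x + ρ * t * psi m n Gl Gu x d) ∧
  σ * psi m n Gl Gu x d ≤ psi m n Gl Gu (x + t • d) d

def StrongWolfe (m n : ℕ) (Gl Gu : Fin m → EuclideanSpace ℝ (Fin n) → ℝ)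
    (ρ σ : ℝ) (x d : EuclideanSpace ℝ (Fin n)) (t : ℝ) : Prop :=
  (∀ i : Fin m,
      Gl i (x + t • d) ≤ Gl i x + ρ * t * psi m n Gl Gu x d ∧
      Gu i (x + t • d) ≤ Gu i x + ρ * t * psi m n Gl Gu x d) ∧
  |psi m n Gl Gu (x + t • d) d| ≤ σ * |psi m n Gl Gu x d|

def AssumptionA1 (m n : ℕ) (Gl Gu : Fin m → EuclideanSpace ℝ (Fin n) → ℝ)
    (x0 : EuclideanSpace ℝ (Fin n)) : Prop :=
  ∀ i : Fin m, ∃ L : ℝ, 0 < L ∧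
    ∀ y ∈ LevelSet m n Gl Gu x0, ∀ z ∈ LevelSet m n Gl Gu x0,
      ‖gloVec n (Gl i) (Gu i) y - gloVec n (Gl i) (Gu i) z‖ ≤ L * ‖y - z‖ ∧
      ‖ghiVec n (Gl i) (Gu i) y - ghiVec n (Gl i) (Gu i) z‖ ≤ L * ‖y - z‖

def AssumptionA2 (m n : ℕ) (Gl Gu : Fin m → EuclideanSpace ℝ (Fin n) → ℝ)
    (x0 : EuclideanSpace ℝ (Fin n)) : Prop :=
  ∀ y : ℕ → EuclideanSpace ℝ (Fin n),
    (∀ k, y k ∈ LevelSet m n Gl Gu x0) →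
    (∀ (i : Fin m) (k : ℕ), Gl i (y (k+1)) ≤ Gl i (y k) ∧ Gu i (y (k+1)) ≤ Gu i (y k)) →
    ∀ i : Fin m, (∃ Cl : ℝ, ∀ k, Cl ≤ Gl i (y k)) ∧ (∃ Cu : ℝ, ∀ k, Cu ≤ Gu i (y k))

/-!
`ψ_x` is sublinear, being a finite maximum of functions `v ↦ aᵀv + bᵀ|v|` with `b ≥ 0`, so
`ψ_{x^{k+1}}(d^{k+1}) ≤ ψ_{x^{k+1}}(v(x^{k+1})) + β_{k+1} ψ_{x^{k+1}}(d^k)`. Once `ψ_{x^k}(d^k) ≤ 0`,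
the strong Wolfe condition gives `ψ_{x^{k+1}}(d^k) ≤ -σ ψ_{x^k}(d^k)`; adding `ζ` times this to
`σ` times the bound on `β_{k+1}` cancels `ψ_{x^k}(d^k)` and leaves
`(ζ + σ) β_{k+1} ψ_{x^{k+1}}(d^k) ≤ -σ ψ_{x^{k+1}}(v(x^{k+1}))`, which closes the induction.
Negativity of `ψ_x(v(x))` comes from comparing the minimizer `v(x) ≠ 0` with `w = 0`.
-/

open Finset

lemma Real.iSup_add_le_of_finite {ι : Type*} [Finite ι] (f g : ι → ℝ) :
    ⨆ i, (f i + g i) ≤ (⨆ i, f i) + ⨆ i, g i := by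
  cases isEmpty_or_nonempty ι
  · simp [Real.iSup_of_isEmpty]
  · exact ciSup_le fun i => add_le_add (le_ciSup (Set.finite_range f).bddAbove i)
      (le_ciSup (Set.finite_range g).bddAbove i)

section Psi

variable {m n : ℕ} {Gl Gu : Fin m → EuclideanSpace ℝ (Fin n) → ℝ} {x : EuclideanSpace ℝ (Fin n)}

lemma glo_le_ghi (F H : EuclideanSpace ℝ (Fin n) → ℝ) (x : EuclideanSpace ℝ (Fin n)) (j : Fin n) :
    glo n F H x j ≤ ghi n F H x j :=
  min_le_max

lemma psi_add_le (v w : EuclideanSpace ℝ (Fin n)) :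
    psi m n Gl Gu x (v + w) ≤ psi m n Gl Gu x v + psi m n Gl Gu x w := by
  refine (ciSup_mono (Set.finite_range _).bddAbove fun i => ?_).trans
    (Real.iSup_add_le_of_finite _ _)
  simp only [PiLp.add_apply]
  have habs := sum_le_sum fun j (_ : j ∈ univ) => mul_le_mul_of_nonneg_left
    (abs_add_le (v j) (w j)) (sub_nonneg.2 (glo_le_ghi (Gl i) (Gu i) x j))
  simp only [mul_add, sum_add_distrib] at habs ⊢
  linarith

lemma psi_smul {b : ℝ} (hb : 0 ≤ b) (v : EuclideanSpace ℝ (Fin n)) :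
    psi m n Gl Gu x (b • v) = b * psi m n Gl Gu x v := by
  rw [psi, psi, Real.mul_iSup_of_nonneg hb]
  congr 1 with i
  simp only [PiLp.smul_apply, smul_eq_mul, abs_mul, abs_of_nonneg hb, mul_left_comm _ b,
    ← mul_sum]
  ring

lemma psi_zero : psi m n Gl Gu x 0 = 0 := by
  simpa using psi_smul (Gl := Gl) (Gu := Gu) (x := x) le_rfl 0

lemma psi_add_smul_le (v d : EuclideanSpace ℝ (Fin n)) {b : ℝ} (hb : 0 ≤ b) :
    psi m n Gl Gu x (v + b • d) ≤ psi m n Gl Gu x v + b * psi m n Gl Gu x d :=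
  psi_smul (Gl := Gl) hb d ▸ psi_add_le v (b • d)

lemma psi_neg_of_minimizer {v : EuclideanSpace ℝ (Fin n)}
    (hmin : ∀ w, psi m n Gl Gu x v + (1/2) * ‖v‖^2 ≤ psi m n Gl Gu x w + (1/2) * ‖w‖^2)
    (hv : v ≠ 0) : psi m n Gl Gu x v < 0 := by
  have h := hmin 0
  rw [psi_zero, norm_zero] at h
  nlinarith [norm_pos_iff.2 hv]

end Psi

lemma mdy_descent_step {σ ζ P A V β D : ℝ} (hσ : 0 < σ) (hζ : 0 < ζ) (hP : P ≤ 0)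
    (hA : |A| ≤ σ * |P|) (hβ : 0 ≤ β) (hβA : β * (A - ζ * P) ≤ -V) (hD : D ≤ V + β * A) :
    D ≤ ζ / (ζ + σ) * V := by
  have hAP : A ≤ -σ * P := by
    rw [abs_of_nonpos hP] at hA
    linarith [le_abs_self A]
  have hβσ := mul_le_mul_of_nonneg_left hβA hσ.le
  have hβζ : ζ * (β * (A + σ * P)) ≤ 0 :=
    mul_nonpos_of_nonneg_of_nonpos hζ.le (mul_nonpos_of_nonneg_of_nonpos hβ (by linarith))
  rw [div_mul_eq_mul_div, le_div_iff₀ (by positivity)]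
  calc D * (ζ + σ) ≤ (V + β * A) * (ζ + σ) := by gcongr
    _ ≤ ζ * V := by linarith

theorem mdy_sufficient_descent_general (m n : ℕ)
    (Gl Gu : Fin m → EuclideanSpace ℝ (Fin n) → ℝ)
    (vv : EuclideanSpace ℝ (Fin n) → EuclideanSpace ℝ (Fin n))
    (hvmin : ∀ y w : EuclideanSpace ℝ (Fin n),
      psi m n Gl Gu y (vv y) + (1/2) * ‖vv y‖^2 ≤ psi m n Gl Gu y w + (1/2) * ‖w‖^2)
    (ρ σ : ℝ) (hρ : 0 < ρ) (hρσ : ρ < σ)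
    (x d : ℕ → EuclideanSpace ℝ (Fin n)) (t : ℕ → ℝ) (β : ℕ → ℝ)
    (hx : ∀ k : ℕ, x (k+1) = x k + t k • d k)
    (hd0 : d 0 = vv (x 0))
    (hdk : ∀ k : ℕ, d (k+1) = vv (x (k+1)) + β (k+1) • d k)
    (hvne : ∀ k : ℕ, vv (x k) ≠ 0)
    (ζ : ℝ) (hζ : 1 < ζ)
    (hw : ∀ k : ℕ, StrongWolfe m n Gl Gu ρ σ (x k) (d k) (t k))
    (hβ : ∀ k : ℕ, 0 ≤ β (k+1) ∧
      β (k+1) * (psi m n Gl Gu (x (k+1)) (d k) - ζ * psi m n Gl Gu (x k) (d k))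
        ≤ -psi m n Gl Gu (x (k+1)) (vv (x (k+1)))) :
    ∀ k : ℕ, psi m n Gl Gu (x k) (d k) ≤ (ζ / (ζ + σ)) * psi m n Gl Gu (x k) (vv (x k)) ∧
      (ζ / (ζ + σ)) * psi m n Gl Gu (x k) (vv (x k)) < 0 := by
  have hσ : 0 < σ := hρ.trans hρσ
  have hζ0 : 0 < ζ := zero_lt_one.trans hζ
  have hv : ∀ k, psi m n Gl Gu (x k) (vv (x k)) < 0 := fun k =>
    psi_neg_of_minimizer (hvmin (x k)) (hvne k)
  have hbound : ∀ k, ζ / (ζ + σ) * psi m n Gl Gu (x k) (vv (x k)) < 0 := fun k =>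
    mul_neg_of_pos_of_neg (by positivity) (hv k)
  intro k
  refine ⟨?_, hbound k⟩
  induction k with
  | zero =>
    rw [hd0]
    exact le_mul_of_le_one_left (hv 0).le
      (div_le_one_of_le₀ (le_add_of_nonneg_right hσ.le) (by positivity))
  | succ k ih =>
    obtain ⟨hβ0, hβk⟩ := hβ k
    have hcurv := (hw k).2
    rw [← hx k] at hcurv
    refine mdy_descent_step hσ hζ0 (ih.trans (hbound k).le) hcurv hβ0 hβk ?_
    rw [hdk k]
    exact psi_add_smul_le _ _ hβ0

theorem mdy_sufficient_descent (m n : ℕ) (hm : 0 < m) (hn : 0 < n)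
    (Gl Gu : Fin m → EuclideanSpace ℝ (Fin n) → ℝ)
    (hGl : ∀ i, ContDiff ℝ 1 (Gl i)) (hGu : ∀ i, ContDiff ℝ 1 (Gu i))
    (hle : ∀ (i : Fin m) (x : EuclideanSpace ℝ (Fin n)), Gl i x ≤ Gu i x)
    (vv : EuclideanSpace ℝ (Fin n) → EuclideanSpace ℝ (Fin n))
    (hvmin : ∀ y w : EuclideanSpace ℝ (Fin n),
      psi m n Gl Gu y (vv y) + (1/2) * ‖vv y‖^2 ≤ psi m n Gl Gu y w + (1/2) * ‖w‖^2)
    (ρ σ : ℝ) (hρ : 0 < ρ) (hρσ : ρ < σ) (hσ : σ < 1)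
    (x d : ℕ → EuclideanSpace ℝ (Fin n)) (t : ℕ → ℝ) (β : ℕ → ℝ)
    (hx : ∀ k : ℕ, x (k+1) = x k + t k • d k)
    (ht : ∀ k : ℕ, 0 < t k)
    (hd0 : d 0 = vv (x 0))
    (hdk : ∀ k : ℕ, d (k+1) = vv (x (k+1)) + β (k+1) • d k)
    (hvne : ∀ k : ℕ, vv (x k) ≠ 0)
    (ζ : ℝ) (hζ : 1 < ζ)
    (hw : ∀ k : ℕ, StrongWolfe m n Gl Gu ρ σ (x k) (d k) (t k))
    (hβ : ∀ k : ℕ, 0 ≤ β (k+1) ∧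
      β (k+1) * (psi m n Gl Gu (x (k+1)) (d k) - ζ * psi m n Gl Gu (x k) (d k))
        ≤ -psi m n Gl Gu (x (k+1)) (vv (x (k+1)))) :
    ∀ k : ℕ, psi m n Gl Gu (x k) (d k) ≤ (ζ / (ζ + σ)) * psi m n Gl Gu (x k) (vv (x k)) ∧
      (ζ / (ζ + σ)) * psi m n Gl Gu (x k) (vv (x k)) < 0 :=
  mdy_sufficient_descent_general m n Gl Gu vv hvmin ρ σ hρ hρσ x d t β hx hd0 hdk hvne ζ hζ hw hβ
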